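/- Let u, v be smooth 2π-periodic-in-x solutions of u_t = 2 u u_x - v, v_t = 2 u v_x. Then Ĥ_η := (1/2) ∫₀^{2π} (u v_x - v u_x) dx is conserved in time. -/

import Mathlib

open Real

noncomputable def pdx (f : ℝ → ℝ → ℝ) (x t : ℝ) : ℝ := deriv (fun y => f y t) x

noncomputable def pdt (f : ℝ → ℝ → ℝ) (x t : ℝ) : ℝ := deriv (fun s => f x s) t

/-- The material derivative `D_t = ∂/∂t + u ∂/∂x` associated to the velocity `u`. -/
noncomputable def matDt (u f : ℝ → ℝ → ℝ) : ℝ → ℝ → ℝ :=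
  fun x t => pdt f x t + u x t * pdx f x t

open Function MeasureTheory

section aux
variable {f : ℝ → ℝ → ℝ}
lemma hasDerivAt_x (hf : ContDiff ℝ (⊤ : ℕ∞) (Function.uncurry f)) (x t : ℝ) :
    HasDerivAt (fun y => f y t) (fderiv ℝ (Function.uncurry f) (x, t) (1, 0)) x := by
  have h1 : HasFDerivAt (Function.uncurry f) (fderiv ℝ (Function.uncurry f) (x, t)) (x, t) :=
    (hf.differentiable (by simp) (x, t)).hasFDerivAt
  have h2 : HasDerivAt (fun y : ℝ => ((y : ℝ), t)) ((1 : ℝ), (0 : ℝ)) x :=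
    (hasDerivAt_id x).prodMk (hasDerivAt_const x t)
  exact h1.comp_hasDerivAt x h2
lemma hasDerivAt_t (hf : ContDiff ℝ (⊤ : ℕ∞) (Function.uncurry f)) (x t : ℝ) :
    HasDerivAt (fun s => f x s) (fderiv ℝ (Function.uncurry f) (x, t) (0, 1)) t := by
  have h1 : HasFDerivAt (Function.uncurry f) (fderiv ℝ (Function.uncurry f) (x, t)) (x, t) :=
    (hf.differentiable (by simp) (x, t)).hasFDerivAt
  have h2 : HasDerivAt (fun s : ℝ => ((x : ℝ), s)) ((0 : ℝ), (1 : ℝ)) t :=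
    (hasDerivAt_const t x).prodMk (hasDerivAt_id t)
  exact h1.comp_hasDerivAt t h2
lemma pdx_eq (hf : ContDiff ℝ (⊤ : ℕ∞) (Function.uncurry f)) (x t : ℝ) :
    pdx f x t = fderiv ℝ (Function.uncurry f) (x, t) (1, 0) := (hasDerivAt_x hf x t).deriv
lemma pdt_eq (hf : ContDiff ℝ (⊤ : ℕ∞) (Function.uncurry f)) (x t : ℝ) :
    pdt f x t = fderiv ℝ (Function.uncurry f) (x, t) (0, 1) := (hasDerivAt_t hf x t).deriv
lemma hasDerivAt_pdx (hf : ContDiff ℝ (⊤ : ℕ∞) (Function.uncurry f)) (x t : ℝ) :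
    HasDerivAt (fun y => f y t) (pdx f x t) x := by
  rw [pdx_eq hf]; exact hasDerivAt_x hf x t
lemma hasDerivAt_pdt (hf : ContDiff ℝ (⊤ : ℕ∞) (Function.uncurry f)) (x t : ℝ) :
    HasDerivAt (fun s => f x s) (pdt f x t) t := by
  rw [pdt_eq hf]; exact hasDerivAt_t hf x t
lemma contDiff_pdx (hf : ContDiff ℝ (⊤ : ℕ∞) (Function.uncurry f)) :
    ContDiff ℝ (⊤ : ℕ∞) (fun p : ℝ × ℝ => pdx f p.1 p.2) := by
  have h : (fun p : ℝ × ℝ => pdx f p.1 p.2)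
      = fun p => fderiv ℝ (Function.uncurry f) p ((1 : ℝ), (0 : ℝ)) := by
    funext p; exact pdx_eq hf p.1 p.2
  rw [h]; exact (hf.fderiv_right (by simp)).clm_apply contDiff_const
lemma contDiff_pdt (hf : ContDiff ℝ (⊤ : ℕ∞) (Function.uncurry f)) :
    ContDiff ℝ (⊤ : ℕ∞) (fun p : ℝ × ℝ => pdt f p.1 p.2) := by
  have h : (fun p : ℝ × ℝ => pdt f p.1 p.2)
      = fun p => fderiv ℝ (Function.uncurry f) p ((0 : ℝ), (1 : ℝ)) := by
    funext p; exact pdt_eq hf p.1 p.2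
  rw [h]; exact (hf.fderiv_right (by simp)).clm_apply contDiff_const
lemma fderiv_fderiv_apply (hf : ContDiff ℝ (⊤ : ℕ∞) (Function.uncurry f)) (q : ℝ × ℝ) (c w : ℝ × ℝ) :
    fderiv ℝ (fun p => fderiv ℝ (Function.uncurry f) p c) q w
      = fderiv ℝ (fderiv ℝ (Function.uncurry f)) q w c := by
  have hA : HasFDerivAt (fderiv ℝ (Function.uncurry f))
      (fderiv ℝ (fderiv ℝ (Function.uncurry f)) q) q :=
    ((hf.fderiv_right (m := (⊤ : ℕ∞)) (by simp)).differentiable (by simp) q).hasFDerivAt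
  have h := (ContinuousLinearMap.apply ℝ ℝ c).hasFDerivAt.comp q hA
  have := h.fderiv
  rw [show ((ContinuousLinearMap.apply ℝ ℝ c) ∘ fderiv ℝ (Function.uncurry f))
      = fun p => fderiv ℝ (Function.uncurry f) p c from rfl] at this
  rw [this]; rfl
lemma clairaut (hf : ContDiff ℝ (⊤ : ℕ∞) (Function.uncurry f)) (x t : ℝ) :
    pdt (pdx f) x t = pdx (pdt f) x t := by
  have hpx : ContDiff ℝ (⊤ : ℕ∞) (Function.uncurry (pdx f)) := contDiff_pdx hf
  have hpt : ContDiff ℝ (⊤ : ℕ∞) (Function.uncurry (pdt f)) := contDiff_pdt hf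
  rw [pdt_eq hpx, pdx_eq hpt]
  have e1 : Function.uncurry (pdx f) = fun p => fderiv ℝ (Function.uncurry f) p ((1:ℝ),(0:ℝ)) := by
    funext p; exact pdx_eq hf p.1 p.2
  have e2 : Function.uncurry (pdt f) = fun p => fderiv ℝ (Function.uncurry f) p ((0:ℝ),(1:ℝ)) := by
    funext p; exact pdt_eq hf p.1 p.2
  rw [e1, e2, fderiv_fderiv_apply hf, fderiv_fderiv_apply hf]
  exact (hf.contDiffAt.isSymmSndFDerivAt (by rw [minSmoothness_of_isRCLikeNormedField]; exact WithTop.coe_le_coe.mpr le_top)) _ _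
end aux

noncomputable def Gfun (u v : ℝ → ℝ → ℝ) : ℝ → ℝ → ℝ :=
  fun x t => u x t * pdx v x t - v x t * pdx u x t
noncomputable def Ffun (u v : ℝ → ℝ → ℝ) : ℝ → ℝ → ℝ :=
  fun x t => 2 * (u x t)^2 * pdx v x t - 2 * u x t * v x t * pdx u x t

theorem statement9
    (u v : ℝ → ℝ → ℝ)
    (hu : ContDiff ℝ (⊤ : ℕ∞) (Function.uncurry u))
    (hv : ContDiff ℝ (⊤ : ℕ∞) (Function.uncurry v))
    (hup : ∀ t, Function.Periodic (fun x => u x t) (2 * Real.pi))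
    (hvp : ∀ t, Function.Periodic (fun x => v x t) (2 * Real.pi))
    (heq1 : ∀ x t, pdt u x t = 2 * u x t * pdx u x t - v x t)
    (heq2 : ∀ x t, pdt v x t = 2 * u x t * pdx v x t) :
    ∀ t, deriv (fun s => (1/2) * ∫ x in (0:ℝ)..(2 * Real.pi),
      (u x s * pdx v x s - v x s * pdx u x s)) t = 0 := by
  have hux : ContDiff ℝ (⊤ : ℕ∞) (Function.uncurry (pdx u)) := contDiff_pdx hu
  have hvx : ContDiff ℝ (⊤ : ℕ∞) (Function.uncurry (pdx v)) := contDiff_pdx hv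
  have hG : ContDiff ℝ (⊤ : ℕ∞) (Function.uncurry (Gfun u v)) := (hu.mul hvx).sub (hv.mul hux)
  have hF : ContDiff ℝ (⊤ : ℕ∞) (Function.uncurry (Ffun u v)) :=
    ((contDiff_const.mul (hu.pow 2)).mul hvx).sub
      (((contDiff_const.mul hu).mul hv).mul hux)
  -- mixed partials via the PDE
  have hmix_v : ∀ x t, pdt (pdx v) x t
      = 2 * pdx u x t * pdx v x t + 2 * u x t * pdx (pdx v) x t := by
    intro x t
    rw [clairaut hv]
    have e : (fun y => pdt v y t) = fun y => 2 * u y t * pdx v y t := funext fun y => heq2 y t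
    have d : HasDerivAt (fun y => 2 * u y t * pdx v y t)
        (2 * pdx u x t * pdx v x t + 2 * u x t * pdx (pdx v) x t) x := by
      have h := ((hasDerivAt_pdx hu x t).const_mul 2).mul (hasDerivAt_pdx hvx x t)
      exact h.congr_deriv (by ring)
    show deriv (fun y => pdt v y t) x = _
    rw [e]; exact d.deriv
  have hmix_u : ∀ x t, pdt (pdx u) x t
      = 2 * pdx u x t * pdx u x t + 2 * u x t * pdx (pdx u) x t - pdx v x t := by
    intro x t
    rw [clairaut hu]
    have e : (fun y => pdt u y t) = fun y => 2 * u y t * pdx u y t - v y t :=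
      funext fun y => heq1 y t
    have d : HasDerivAt (fun y => 2 * u y t * pdx u y t - v y t)
        (2 * pdx u x t * pdx u x t + 2 * u x t * pdx (pdx u) x t - pdx v x t) x := by
      have h := (((hasDerivAt_pdx hu x t).const_mul 2).mul (hasDerivAt_pdx hux x t)).sub
        (hasDerivAt_pdx hv x t)
      exact h.congr_deriv (by ring)
    show deriv (fun y => pdt u y t) x = _
    rw [e]; exact d.deriv
  -- key identity : time derivative of the density is an x-derivative
  have key : ∀ x t, pdt (Gfun u v) x t = pdx (Ffun u v) x t := by
    intro x t
    have hGd : HasDerivAt (fun s => Gfun u v x s)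
        (pdt u x t * pdx v x t + u x t * pdt (pdx v) x t
          - (pdt v x t * pdx u x t + v x t * pdt (pdx u) x t)) t :=
      ((hasDerivAt_pdt hu x t).mul (hasDerivAt_pdt hvx x t)).sub
        ((hasDerivAt_pdt hv x t).mul (hasDerivAt_pdt hux x t))
    have hFd : HasDerivAt (fun y => Ffun u v y t)
        (2 * (2 * u x t * pdx u x t) * pdx v x t + 2 * (u x t)^2 * pdx (pdx v) x t
          - ((2 * pdx u x t * v x t + 2 * u x t * pdx v x t) * pdx u x t
            + 2 * u x t * v x t * pdx (pdx u) x t)) x := by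
      have h := ((((hasDerivAt_pdx hu x t).pow 2).const_mul 2).mul (hasDerivAt_pdx hvx x t)).sub
        ((((hasDerivAt_pdx hu x t).const_mul 2).mul (hasDerivAt_pdx hv x t)).mul
          (hasDerivAt_pdx hux x t))
      exact h.congr_deriv (by norm_num)
    have e1 : pdt (Gfun u v) x t = _ := hGd.deriv
    have e2 : pdx (Ffun u v) x t = _ := hFd.deriv
    rw [e1, e2, hmix_v x t, hmix_u x t, heq1 x t, heq2 x t]
    ring
  -- the x-integral of pdt G vanishes by FTC and periodicity
  have hint : ∀ t, (∫ x in (0:ℝ)..(2 * Real.pi), pdt (Gfun u v) x t) = 0 := by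
    intro t
    have hcongr : (∫ x in (0:ℝ)..(2 * Real.pi), pdt (Gfun u v) x t)
        = ∫ x in (0:ℝ)..(2 * Real.pi), deriv (fun y => Ffun u v y t) x := by
      apply intervalIntegral.integral_congr
      intro x _
      exact key x t
    rw [hcongr]
    have hdiff : ∀ x ∈ Set.uIcc (0:ℝ) (2 * Real.pi), DifferentiableAt ℝ (fun y => Ffun u v y t) x :=
      fun x _ => (hasDerivAt_pdx hF x t).differentiableAt
    have hcont : Continuous (fun x => pdx (Ffun u v) x t) :=
      (contDiff_pdx hF).continuous.comp (continuous_id.prodMk continuous_const)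
    have hii : IntervalIntegrable (deriv (fun y => Ffun u v y t)) volume 0 (2 * Real.pi) := by
      have : deriv (fun y => Ffun u v y t) = fun x => pdx (Ffun u v) x t := rfl
      rw [this]; exact hcont.intervalIntegrable _ _
    rw [intervalIntegral.integral_deriv_eq_sub hdiff hii]
    -- periodicity
    have pu : u (2 * Real.pi) t = u 0 t := by simpa using hup t 0
    have pv : v (2 * Real.pi) t = v 0 t := by simpa using hvp t 0
    have eux : pdx u (2 * Real.pi) t = pdx u 0 t := by
      show deriv (fun y => u y t) (2 * Real.pi) = deriv (fun y => u y t) 0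
      have e : (fun y : ℝ => u (y + 2 * Real.pi) t) = fun y => u y t :=
        funext fun y => hup t y
      rw [show (2 * Real.pi) = 0 + 2 * Real.pi by ring, ← deriv_comp_add_const, e]
    have evx : pdx v (2 * Real.pi) t = pdx v 0 t := by
      show deriv (fun y => v y t) (2 * Real.pi) = deriv (fun y => v y t) 0
      have e : (fun y : ℝ => v (y + 2 * Real.pi) t) = fun y => v y t :=
        funext fun y => hvp t y
      rw [show (2 * Real.pi) = 0 + 2 * Real.pi by ring, ← deriv_comp_add_const, e]
    show 2 * (u (2 * Real.pi) t)^2 * pdx v (2 * Real.pi) t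
        - 2 * u (2 * Real.pi) t * v (2 * Real.pi) t * pdx u (2 * Real.pi) t
        - (2 * (u 0 t)^2 * pdx v 0 t - 2 * u 0 t * v 0 t * pdx u 0 t) = 0
    rw [pu, pv, eux, evx]; ring
  -- differentiate under the integral sign
  intro t₀
  have hGcont : Continuous (fun p : ℝ × ℝ => Gfun u v p.1 p.2) := hG.continuous
  have hGtcont : Continuous (fun p : ℝ × ℝ => pdt (Gfun u v) p.1 p.2) := (contDiff_pdt hG).continuous
  obtain ⟨C, hC⟩ := ((isCompact_uIcc (a := (0:ℝ)) (b := 2 * Real.pi)).prod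
    (isCompact_Icc (a := t₀ - 1) (b := t₀ + 1))).exists_bound_of_continuousOn
    hGtcont.continuousOn
  have main := intervalIntegral.hasDerivAt_integral_of_dominated_loc_of_deriv_le
      (F := fun s x => Gfun u v x s) (F' := fun s x => pdt (Gfun u v) x s) (x₀ := t₀)
      (a := (0:ℝ)) (b := 2 * Real.pi) (μ := volume) (bound := fun _ => C) (s := Metric.ball t₀ 1)
      (Metric.ball_mem_nhds t₀ one_pos)
      (Filter.Eventually.of_forall fun s =>
        ((hGcont.comp (continuous_id.prodMk continuous_const)).aestronglyMeasurable))
      ((hGcont.comp (continuous_id.prodMk continuous_const)).intervalIntegrable _ _)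
      ((hGtcont.comp (continuous_id.prodMk continuous_const)).aestronglyMeasurable)
      (ae_of_all _ fun x hx s hs => by
        have hx' : x ∈ Set.uIcc (0:ℝ) (2 * Real.pi) := Set.uIoc_subset_uIcc hx
        have hs' : s ∈ Set.Icc (t₀ - 1) (t₀ + 1) := by
          rw [Real.ball_eq_Ioo] at hs
          exact Set.Ioo_subset_Icc_self hs
        exact hC (x, s) ⟨hx', hs'⟩)
      (intervalIntegrable_const)
      (ae_of_all _ fun x hx s hs => hasDerivAt_pdt hG x s)
  have hD : HasDerivAt (fun s => ∫ x in (0:ℝ)..(2 * Real.pi), Gfun u v x s) 0 t₀ := by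
    have := main.2
    rwa [hint t₀] at this
  have hD2 : HasDerivAt (fun s => (1/2 : ℝ) * ∫ x in (0:ℝ)..(2 * Real.pi),
      (u x s * pdx v x s - v x s * pdx u x s)) ((1/2 : ℝ) * 0) t₀ := hD.const_mul (1/2 : ℝ)
  simpa using hD2.deriv
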